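/- The direct product of two Prieto groups is Prieto: if A and B are finitely generated left-orderable groups all of whose positive cones are coarsely connected, then every positive cone of A × B is coarsely connected. -/

import Mathlib

open scoped Pointwise

/-- A positive cone of a group `G`: a subsemigroup `P` such that
`G = P ⊔ P⁻¹ ⊔ {1}` (disjoint union). -/
def IsPositiveCone {G : Type*} [Group G] (P : Set G) : Prop :=
  (∀ a ∈ P, ∀ b ∈ P, a * b ∈ P) ∧
  (∀ g : G, g ∈ P ∨ g⁻¹ ∈ P ∨ g = 1) ∧
  (∀ g ∈ P, g⁻¹ ∉ P) ∧
  (1 : G) ∉ P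

/-- Word length of `g` with respect to the generating set `X`. -/
noncomputable def wordLength {G : Type*} [Group G] (X : Set G) (g : G) : ℕ :=
  sInf {n | ∃ l : List G, (∀ x ∈ l, x ∈ X) ∧ l.length = n ∧ l.prod = g}

/-- Word metric on `G` with respect to `X`. -/
noncomputable def wordDist {G : Type*} [Group G] (X : Set G) (g h : G) : ℕ :=
  wordLength X (g⁻¹ * h)

/-- An `r`-path from `a` to `b` supported in `S` (consecutive word-metric
distances at most `r`). -/
def IsRPath {G : Type*} [Group G] (X : Set G) (r : ℕ) (S : Set G) (a b : G) : Prop :=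
  ∃ l : List G, l ≠ [] ∧ l.head? = some a ∧ l.getLast? = some b ∧
    (∀ x ∈ l, x ∈ S) ∧ l.Chain' (fun u v => wordDist X u v ≤ r)

/-- `S` is `r`-coarsely connected in the Cayley graph `Γ(G,X)`. -/
def CoarselyConnectedWith {G : Type*} [Group G] (X : Set G) (r : ℕ) (S : Set G) : Prop :=
  ∀ a ∈ S, ∀ b ∈ S, IsRPath X r S a b

/-- `X` is a finite symmetric generating set of `G`. -/
def IsGenSet {G : Type*} [Group G] (X : Set G) : Prop :=
  X.Finite ∧ (∀ x ∈ X, x⁻¹ ∈ X) ∧ Subgroup.closure X = ⊤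

/-- A positive cone on a subset `K` of `G` (used for subgroups such as kernels). -/
def IsPositiveConeOn {G : Type*} [Group G] (K P : Set G) : Prop :=
  P ⊆ K ∧ (∀ a ∈ P, ∀ b ∈ P, a * b ∈ P) ∧ (∀ g ∈ K, g ∈ P ∨ g⁻¹ ∈ P ∨ g = 1) ∧
  (∀ g ∈ P, g⁻¹ ∉ P) ∧ (1 : G) ∉ P

/-- The sub-semigroup generated by `S`: nonempty products of elements of `S`. -/
def SemigroupClosure {G : Type*} [Group G] (S : Set G) : Set G :=
  {g | ∃ l : List G, l ≠ [] ∧ (∀ x ∈ l, x ∈ S) ∧ l.prod = g}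

/-!
The cones `P_A = {a | (a, 1) ∈ P}` and `P_B = {b | (1, b) ∈ P}` are positive cones of `A` and
`B`, hence coarsely connected. As `P` is a semigroup, the left translates `p (P_A × 1)` and
`p (1 × P_B)` of `p ∈ P` lie in `P`, and `p` is within distance one of each of them because a
nonempty positive cone contains a generator; so `p` can be joined inside `P` to `p (a, 1)` and
`p (1, b)` for all `a ∈ P_A`, `b ∈ P_B`. These axis moves connect any two points of `P`: a point
`(a, b)` moves to `(a, 1)` if `a ∈ P_A` and to `(1, b)` if `a⁻¹ ∈ P_A`; two points on the same
axis differ by an element of that axis cone or its inverse; and `(a, 1)`, `(1, b)` both move to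
`(a, b)`.
-/

section WordMetric

variable {G : Type*} [Group G] {X : Set G}

lemma wordLength_le {g : G} {l : List G} (hl : ∀ x ∈ l, x ∈ X) (hp : l.prod = g) :
    wordLength X g ≤ l.length :=
  Nat.sInf_le ⟨l, hl, rfl, hp⟩

lemma wordLength_le_one {x : G} (hx : x ∈ X) : wordLength X x ≤ 1 :=
  wordLength_le (l := [x]) (by simpa using hx) (by simp)

lemma wordDist_self (g : G) : wordDist X g g = 0 :=
  Nat.le_zero.mp (by simpa [wordDist] using wordLength_le (X := X) (l := []) (by simp) rfl)

lemma wordDist_mul_left (g u v : G) : wordDist X (g * u) (g * v) = wordDist X u v := by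
  simp [wordDist, mul_assoc]

lemma exists_list_prod_eq (hX : Subgroup.closure X = ⊤) (hsymm : ∀ x ∈ X, x⁻¹ ∈ X)
    (g : G) :
    ∃ l : List G, (∀ x ∈ l, x ∈ X) ∧ l.prod = g := by
  have hg : g ∈ Submonoid.closure (X ∪ X⁻¹) := by
    rw [← Subgroup.closure_toSubmonoid, hX]; trivial
  obtain ⟨l, hl, rfl⟩ := Submonoid.exists_list_of_mem_closure hg
  refine ⟨l, fun x hx => ?_, rfl⟩
  rcases hl x hx with h | h
  exacts [h, inv_inv x ▸ hsymm _ h]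

lemma wordLength_inv (hsymm : ∀ x ∈ X, x⁻¹ ∈ X) (g : G) :
    wordLength X g⁻¹ = wordLength X g := by
  have key : ∀ h : G, ∀ n, (∃ l : List G, (∀ x ∈ l, x ∈ X) ∧ l.length = n ∧ l.prod = h) →
      ∃ l : List G, (∀ x ∈ l, x ∈ X) ∧ l.length = n ∧ l.prod = h⁻¹ := by
    rintro h n ⟨l, hl, rfl, rfl⟩
    refine ⟨(l.map (·⁻¹)).reverse, ?_, by simp, (List.prod_inv_reverse l).symm⟩
    simpa using fun x hx => inv_inv x ▸ hsymm _ (hl _ hx)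
  unfold wordLength
  congr 1
  ext n
  exact ⟨fun h => inv_inv g ▸ key _ n h, key g n⟩

lemma wordDist_comm (hsymm : ∀ x ∈ X, x⁻¹ ∈ X) (u v : G) :
    wordDist X u v = wordDist X v u := by
  rw [wordDist, ← wordLength_inv hsymm, mul_inv_rev, inv_inv, wordDist]

lemma exists_list_length_eq_wordLength (hX : Subgroup.closure X = ⊤)
    (hsymm : ∀ x ∈ X, x⁻¹ ∈ X) (g : G) :
    ∃ l : List G, (∀ x ∈ l, x ∈ X) ∧ l.length = wordLength X g ∧ l.prod = g := by
  obtain ⟨l, hl, hp⟩ := exists_list_prod_eq hX hsymm g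
  exact Nat.sInf_mem (s := {n | ∃ l : List G, (∀ x ∈ l, x ∈ X) ∧ l.length = n ∧ l.prod = g})
    ⟨l.length, l, hl, rfl, hp⟩

lemma wordLength_map_le {H : Type*} [Group H] {Y : Set H} (hX : Subgroup.closure X = ⊤)
    (hsymm : ∀ x ∈ X, x⁻¹ ∈ X) (f : G →* H) (hf : ∀ x ∈ X, f x ∈ Y) (g : G) :
    wordLength Y (f g) ≤ wordLength X g := by
  obtain ⟨l, hl, hlen, rfl⟩ := exists_list_length_eq_wordLength hX hsymm g
  calc wordLength Y (f l.prod) ≤ (l.map f).length :=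
        wordLength_le (by simpa using fun x hx => hf x (hl x hx)) (map_list_prod f l).symm
    _ = wordLength X l.prod := by simpa using hlen

end WordMetric

namespace IsRPath

variable {G : Type*} [Group G] {X : Set G} {r : ℕ} {S : Set G} {a b c : G}

lemma refl (ha : a ∈ S) : IsRPath X r S a a :=
  ⟨[a], by simp, rfl, rfl, by simpa using ha, List.isChain_singleton a⟩

lemma trans_of_wordDist_le {b' : G} (h₁ : IsRPath X r S a b) (hbb' : wordDist X b b' ≤ r)
    (h₂ : IsRPath X r S b' c) : IsRPath X r S a c := by
  obtain ⟨l₁, hne₁, hh₁, hl₁, hm₁, hc₁⟩ := h₁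
  obtain ⟨l₂, hne₂, hh₂, hl₂, hm₂, hc₂⟩ := h₂
  refine ⟨l₁ ++ l₂, by simp [hne₁], by rwa [List.head?_append_of_ne_nil _ hne₁],
    by rwa [List.getLast?_append_of_ne_nil _ hne₂], ?_, ?_⟩
  · simpa only [List.mem_append] using fun x hx => hx.elim (hm₁ x) (hm₂ x)
  · refine List.isChain_append.mpr ⟨hc₁, hc₂, ?_⟩
    rw [hl₁, hh₂]
    simpa using hbb'

lemma trans (h₁ : IsRPath X r S a b) (h₂ : IsRPath X r S b c) : IsRPath X r S a c :=
  h₁.trans_of_wordDist_le (by simp [wordDist_self]) h₂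

lemma symm (hsymm : ∀ x ∈ X, x⁻¹ ∈ X) (h : IsRPath X r S a b) : IsRPath X r S b a := by
  obtain ⟨l, hne, hh, hl, hm, hc⟩ := h
  refine ⟨l.reverse, by simpa using hne, by rwa [List.head?_reverse],
    by rwa [List.getLast?_reverse], by simpa using hm, ?_⟩
  exact List.isChain_reverse.mpr (hc.imp fun u v h => by rwa [wordDist_comm hsymm])

lemma map {H : Type*} [Group H] {Y : Set H} {T : Set H} (f : G → H)
    (hf : ∀ u v, wordDist Y (f u) (f v) ≤ wordDist X u v) (hST : ∀ x ∈ S, f x ∈ T)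
    (h : IsRPath X r S a b) : IsRPath Y r T (f a) (f b) := by
  obtain ⟨l, hne, hh, hl, hm, hc⟩ := h
  refine ⟨l.map f, by simpa using hne, by simp [hh], by simp [hl], ?_, ?_⟩
  · simpa using fun x hx => hST x (hm x hx)
  · exact List.isChain_map f |>.mpr (hc.imp fun u v h => (hf u v).trans h)

lemma mono {r' : ℕ} (hr : r ≤ r') (h : IsRPath X r S a b) : IsRPath X r' S a b := by
  obtain ⟨l, hne, hh, hl, hm, hc⟩ := h
  exact ⟨l, hne, hh, hl, hm, hc.imp fun u v h => h.trans hr⟩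

end IsRPath

namespace CoarselyConnectedWith

variable {G : Type*} [Group G] {X : Set G} {r : ℕ} {S : Set G}

lemma mono {r' : ℕ} (hr : r ≤ r') (h : CoarselyConnectedWith X r S) :
    CoarselyConnectedWith X r' S :=
  fun a ha b hb => (h a ha b hb).mono hr

lemma image {H : Type*} [Group H] {Y : Set H} (hX : Subgroup.closure X = ⊤)
    (hsymm : ∀ x ∈ X, x⁻¹ ∈ X) (f : G →* H) (hf : ∀ x ∈ X, f x ∈ Y)
    (h : CoarselyConnectedWith X r S) : CoarselyConnectedWith Y r (f '' S) := by
  rintro _ ⟨a, ha, rfl⟩ _ ⟨b, hb, rfl⟩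
  refine (h a ha b hb).map f (fun u v => ?_) (fun x hx => Set.mem_image_of_mem f hx)
  simpa [wordDist] using wordLength_map_le hX hsymm f hf (u⁻¹ * v)

lemma isRPath_mul {T : Set G} (hT : CoarselyConnectedWith X r T)
    (hS : ∀ a ∈ S, ∀ b ∈ S, a * b ∈ S) (hTS : T ⊆ S)
    {t : G} (ht : t ∈ T) (htr : wordLength X t ≤ r) {p q : G} (hp : p ∈ S) (hq : q ∈ T) :
    IsRPath X r S p (p * q) := by
  have hpT : IsRPath X r S (p * t) (p * q) :=
    (hT t ht q hq).map (p * ·) (fun u v => (wordDist_mul_left p u v).le)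
      (fun x hx => hS p hp x (hTS hx))
  exact (IsRPath.refl hp).trans_of_wordDist_le (by simpa [wordDist] using htr) hpT

end CoarselyConnectedWith

namespace IsPositiveCone

variable {G : Type*} [Group G] {P : Set G}

lemma preimage {H : Type*} [Group H] {Q : Set H} (hQ : IsPositiveCone Q) (f : G →* H)
    (hf : Function.Injective f) : IsPositiveCone (f ⁻¹' Q) := by
  obtain ⟨hmul, htri, hasymm, hone⟩ := hQ
  refine ⟨fun a ha b hb => ?_, fun g => ?_, fun g hg hg' => hasymm _ hg (by simpa using hg'),
    by simpa using hone⟩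
  · simpa using hmul _ ha _ hb
  · rcases htri (f g) with h | h | h
    · exact Or.inl h
    · exact Or.inr (Or.inl (by simpa using h))
    · exact Or.inr (Or.inr (hf (by simpa using h)))

lemma exists_mem_of_nonempty (hP : IsPositiveCone P) {X : Set G} (hX : Subgroup.closure X = ⊤)
    (hsymm : ∀ x ∈ X, x⁻¹ ∈ X) (hne : P.Nonempty) : ∃ x ∈ X, x ∈ P := by
  by_contra! h
  have hX1 : X ⊆ {1} := fun x hx =>
    ((hP.2.1 x).resolve_left (h x hx)).resolve_left (h _ (hsymm x hx))
  obtain ⟨g, hg⟩ := hne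
  have hg1 : g ∈ Subgroup.closure X := hX ▸ Subgroup.mem_top g
  rw [Subgroup.closure_eq_bot_iff.mpr hX1, Subgroup.mem_bot] at hg1
  exact hP.2.2.2 (hg1 ▸ hg)

lemma rel_of_inv_mul_mem (hP : IsPositiveCone P) (K : Subgroup G) {R : G → G → Prop}
    (hrefl : ∀ p ∈ P, R p p) (hsymm : ∀ p q, R p q → R q p)
    (hmove : ∀ p ∈ P, ∀ g ∈ P, g ∈ K → R p (p * g)) {p q : G} (hp : p ∈ P) (hq : q ∈ P)
    (hpq : p⁻¹ * q ∈ K) : R p q := by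
  rcases hP.2.1 (p⁻¹ * q) with h | h | h
  · simpa using hmove p hp _ h hpq
  · exact hsymm _ _ (by simpa using hmove q hq _ h (K.inv_mem hpq))
  · rw [inv_mul_eq_one] at h
    exact h ▸ hrefl p hp

lemma isRPath_mul_map (hP : IsPositiveCone P) {X : Set G} {H : Type*} [Group H] {Y : Set H}
    (hY : Subgroup.closure Y = ⊤) (hYsymm : ∀ y ∈ Y, y⁻¹ ∈ Y) (f : H →* G)
    (hf : Function.Injective f) (hfY : ∀ y ∈ Y, f y ∈ X) {r : ℕ} (hr : 1 ≤ r)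
    (hcon : CoarselyConnectedWith Y r (f ⁻¹' P)) {p : G} (hp : p ∈ P) {α : H} (hα : f α ∈ P) :
    IsRPath X r P p (p * f α) := by
  obtain ⟨y, hyY, hyP⟩ := (hP.preimage f hf).exists_mem_of_nonempty hY hYsymm ⟨α, hα⟩
  exact (hcon.image hY hYsymm f hfY).isRPath_mul hP.1 (Set.image_preimage_subset f P)
    (Set.mem_image_of_mem f hyP) ((wordLength_le_one (hfY y hyY)).trans hr) hp
    (Set.mem_image_of_mem f hα)

lemma rel_of_axis_moves {A B : Type*} [Group A] [Group B] {P : Set (A × B)}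
    (hP : IsPositiveCone P) {R : A × B → A × B → Prop} (hrefl : ∀ p ∈ P, R p p)
    (hsymm : ∀ p q, R p q → R q p) (htrans : ∀ p q s, R p q → R q s → R p s)
    (hmoveA : ∀ p ∈ P, ∀ g ∈ P, g.2 = 1 → R p (p * g))
    (hmoveB : ∀ p ∈ P, ∀ g ∈ P, g.1 = 1 → R p (p * g)) {p q : A × B} (hp : p ∈ P)
    (hq : q ∈ P) : R p q := by
  have same_snd : ∀ p ∈ P, ∀ q ∈ P, p.2 = q.2 → R p q := fun p hp q hq h =>
    hP.rel_of_inv_mul_mem (MonoidHom.snd A B).ker hrefl hsymm hmoveA hp hq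
      (MonoidHom.mem_ker.mpr (by simp [h]))
  have same_fst : ∀ p ∈ P, ∀ q ∈ P, p.1 = q.1 → R p q := fun p hp q hq h =>
    hP.rel_of_inv_mul_mem (MonoidHom.fst A B).ker hrefl hsymm hmoveB hp hq
      (MonoidHom.mem_ker.mpr (by simp [h]))
  have to_axis : ∀ p ∈ P, ∃ q ∈ P, (q.2 = 1 ∨ q.1 = 1) ∧ R p q := by
    rintro ⟨a, b⟩ hp
    rcases hP.2.1 (a, 1) with ha | ha | ha
    · exact ⟨(a, 1), ha, Or.inl rfl, same_fst _ hp _ ha rfl⟩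
    · have h1b : ((1 : A), b) ∈ P := by simpa using hP.1 _ ha _ hp
      exact ⟨(1, b), h1b, Or.inr rfl, same_snd _ hp _ h1b rfl⟩
    · exact ⟨(a, b), hp, Or.inr (by simpa using ha), hrefl _ hp⟩
  have across_axes : ∀ p ∈ P, ∀ q ∈ P, p.2 = 1 → q.1 = 1 → R p q := fun p hp q hq hp2 hq1 => by
    have hcomm : q * p = p * q := Prod.ext (by simp [hq1]) (by simp [hp2])
    exact htrans _ _ _ (hmoveB p hp q hq hq1) (hsymm _ _ (hcomm ▸ hmoveA q hq p hp hp2))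
  have axis : ∀ p ∈ P, ∀ q ∈ P, (p.2 = 1 ∨ p.1 = 1) → (q.2 = 1 ∨ q.1 = 1) → R p q := by
    rintro p hp q hq (hp' | hp') (hq' | hq')
    · exact same_snd p hp q hq (hp'.trans hq'.symm)
    · exact across_axes p hp q hq hp' hq'
    · exact hsymm _ _ (across_axes q hq p hp hq' hp')
    · exact same_fst p hp q hq (hp'.trans hq'.symm)
  obtain ⟨p', hp', hp'_axis, hpp'⟩ := to_axis p hp
  obtain ⟨q', hq', hq'_axis, hqq'⟩ := to_axis q hq
  exact htrans _ _ _ hpp' (htrans _ _ _ (axis p' hp' q' hq' hp'_axis hq'_axis) (hsymm _ _ hqq'))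

end IsPositiveCone

/-- the direct product of two Prieto groups is Prieto. -/
theorem stmt_12 {A B : Type*} [Group A] [Group B]
    (XA : Set A) (hXA : IsGenSet XA) (XB : Set B) (hXB : IsGenSet XB)
    (hA : ∀ P : Set A, IsPositiveCone P → ∃ r : ℕ, 1 ≤ r ∧ CoarselyConnectedWith XA r P)
    (hB : ∀ P : Set B, IsPositiveCone P → ∃ r : ℕ, 1 ≤ r ∧ CoarselyConnectedWith XB r P)
    (P : Set (A × B)) (hP : IsPositiveCone P) :
    ∃ r : ℕ, 1 ≤ r ∧ CoarselyConnectedWith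
      ((fun a : A => ((a, 1) : A × B)) '' XA ∪ (fun b : B => ((1, b) : A × B)) '' XB)
      r P := by
  set X := (fun a : A => ((a, 1) : A × B)) '' XA ∪ (fun b : B => ((1, b) : A × B)) '' XB
  have hsymm : ∀ x ∈ X, x⁻¹ ∈ X := by
    rintro _ (⟨a, ha, rfl⟩ | ⟨b, hb, rfl⟩)
    · exact Or.inl ⟨a⁻¹, hXA.2.1 a ha, by simp⟩
    · exact Or.inr ⟨b⁻¹, hXB.2.1 b hb, by simp⟩
  obtain ⟨rA, hrA, hconA⟩ := hA _ (hP.preimage (MonoidHom.inl A B) (Prod.mk_left_injective 1))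
  obtain ⟨rB, -, hconB⟩ := hB _ (hP.preimage (MonoidHom.inr A B) (Prod.mk_right_injective 1))
  have hr : 1 ≤ max rA rB := le_max_of_le_left hrA
  refine ⟨max rA rB, hr, fun p hp q hq => hP.rel_of_axis_moves (R := IsRPath X _ P)
    (fun _ => IsRPath.refl) (fun _ _ => IsRPath.symm hsymm) (fun _ _ _ => IsRPath.trans)
    ?_ ?_ hp hq⟩
  · rintro p hp ⟨a, _⟩ hg (rfl : _ = 1)
    exact hP.isRPath_mul_map hXA.2.2 hXA.2.1 (MonoidHom.inl A B) (Prod.mk_left_injective 1)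
      (fun x hx => Or.inl ⟨x, hx, rfl⟩) hr (hconA.mono (le_max_left _ _)) hp hg
  · rintro p hp ⟨_, b⟩ hg (rfl : _ = 1)
    exact hP.isRPath_mul_map hXB.2.2 hXB.2.1 (MonoidHom.inr A B) (Prod.mk_right_injective 1)
      (fun x hx => Or.inr ⟨x, hx, rfl⟩) hr (hconB.mono (le_max_right _ _)) hp hg
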